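/- Let γ be a permutation of Fin n, let D i ⊆ ℝ for each i ∈ Fin n, and let t ∈ Fin n. Suppose that for every j < t and every x : Fin n → ℝ with x i ∈ D i for all i, one has x j = x (γ⁻¹ j). Then every x with x i ∈ D i for all i that satisfies x ⪰ γ • x also satisfies x t ≥ x (γ⁻¹ t); consequently, if D (γ⁻¹ t) has a least element a then x t ≥ a, and if D t has a greatest element b then x (γ⁻¹ t) ≤ b. -/
import Mathlib


/-- Action of a permutation of `Fin n` on vectors `x : Fin n → ℝ`:
`(γ • x) i = x (γ⁻¹ i)`. -/
def pact {n : ℕ} (γ : Equiv.Perm (Fin n)) (x : Fin n → ℝ) : Fin n → ℝ :=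
  fun i => x (γ⁻¹ i)

/-- Lexicographic order `u ⪰ v` on `Fin n → ℝ`. -/
def lexGe {n : ℕ} (u v : Fin n → ℝ) : Prop :=
  u = v ∨ ∃ k : Fin n, (∀ i : Fin n, i < k → u i = v i) ∧ v k < u k

/-- Validity of step `t` of the lexicographic reduction propagation algorithm
for the constraint `x ⪰ γ • x`: if all vectors in the current domains agree
with their `γ`-image on the coordinates before `t`, then `x ⪰ γ • x` forces
`x t ≥ x (γ⁻¹ t)`, and the corresponding bound reductions are valid. -/
theorem stmt13 (n : ℕ) (γ : Equiv.Perm (Fin n)) (D : Fin n → Set ℝ)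
    (t : Fin n)
    (hpre : ∀ j : Fin n, j < t → ∀ x : Fin n → ℝ,
      (∀ i, x i ∈ D i) → x j = x (γ⁻¹ j)) :
    ∀ x : Fin n → ℝ, (∀ i, x i ∈ D i) → lexGe x (pact γ x) →
      x t ≥ x (γ⁻¹ t) ∧
      (∀ a : ℝ, IsLeast (D (γ⁻¹ t)) a → x t ≥ a) ∧
      (∀ b : ℝ, IsGreatest (D t) b → x (γ⁻¹ t) ≤ b) := by
  intro x hx hlex
  have hmain : x t ≥ x (γ⁻¹ t) := by
    rcases hlex with heq | ⟨k, hk, hkk⟩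
    · exact le_of_eq (congrFun heq t).symm
    · rcases lt_trichotomy k t with h | h | h
      · exact absurd (hpre k h x hx) (ne_of_gt hkk)
      · subst h; exact le_of_lt hkk
      · exact le_of_eq (hk t h).symm
  refine ⟨hmain, fun a ha => le_trans (ha.2 (hx _)) hmain,
    fun b hb => le_trans hmain (hb.2 (hx _))⟩
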